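/- Let V be a finite-dimensional real vector space and let W be a finite subgroup of the group GL(V) of linear automorphisms of V. There exists a nonzero function f : V → ℝ that is W-invariant (f(w(v)) = f(v) for all w ∈ W and v ∈ V) and odd (f(−v) = −f(v) for all v ∈ V) if and only if −id ∉ W. -/
import Mathlib

/-- Let `V` be a finite-dimensional real vector space and `W` a finite
subgroup of `GL(V)`. There exists a nonzero `W`-invariant odd function `f : V → ℝ`
if and only if the central symmetry `-id` does not belong to `W`. -/
theorem stmt_1 (V : Type*) [AddCommGroup V] [Module ℝ V] [FiniteDimensional ℝ V]
    (W : Subgroup (V ≃ₗ[ℝ] V)) [Finite W] :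
    (∃ f : V → ℝ, f ≠ 0 ∧ (∀ w ∈ W, ∀ v : V, f (w v) = f v) ∧ (∀ v : V, f (-v) = -f v)) ↔
      (LinearEquiv.neg ℝ : V ≃ₗ[ℝ] V) ∉ W := by
  classical
  constructor
  · rintro ⟨f, hf, hinv, hodd⟩ hneg
    apply hf
    funext v
    have h1 := hinv _ hneg v
    simp only [LinearEquiv.neg_apply] at h1
    rw [hodd v] at h1
    have : f v = 0 := by linarith
    simpa using this
  · intro hneg
    -- kernels ker(w + id) are proper subspaces
    set p : W → Subspace ℝ V := fun w =>
      LinearMap.ker ((w : V ≃ₗ[ℝ] V).toLinearMap + LinearMap.id) with hp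
    have hne : ∀ w : W, p w ≠ ⊤ := by
      intro w hw
      apply hneg
      have : ((w : V ≃ₗ[ℝ] V) : V ≃ₗ[ℝ] V) = LinearEquiv.neg ℝ := by
        apply LinearEquiv.ext
        intro v
        have hv : v ∈ p w := hw ▸ Submodule.mem_top
        simp only [hp, LinearMap.mem_ker, LinearMap.add_apply, LinearMap.id_apply,
          LinearEquiv.coe_coe] at hv
        have : (w : V ≃ₗ[ℝ] V) v = -v := by
          have := hv; linear_combination (norm := module) this
        simpa [LinearEquiv.neg_apply] using this
      exact this ▸ w.2
    have hcover : ⋃ w : W, ((p w : Subspace ℝ V) : Set V) ≠ Set.univ := by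
      intro h
      obtain ⟨w, hw⟩ := Subspace.exists_eq_top_of_iUnion_eq_univ h
      exact hne w hw
    obtain ⟨v0, hv0⟩ : ∃ v0 : V, ∀ w : W, (w : V ≃ₗ[ℝ] V) v0 ≠ -v0 := by
      rw [Set.ne_univ_iff_exists_notMem] at hcover
      obtain ⟨v0, hv0⟩ := hcover
      refine ⟨v0, fun w hw => ?_⟩
      apply hv0
      refine Set.mem_iUnion.2 ⟨w, ?_⟩
      simp only [hp, SetLike.mem_coe, LinearMap.mem_ker, LinearMap.add_apply,
        LinearMap.id_apply, LinearEquiv.coe_coe, hw]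
      abel
    -- f = indicator of orbit of v0 minus indicator of orbit of -v0
    set P : V → Prop := fun v => ∃ w ∈ W, w v0 = v with hPdef
    refine ⟨fun v => (if P v then (1:ℝ) else 0) - (if P (-v) then 1 else 0), ?_, ?_, ?_⟩
    · intro h
      have h0 := congrFun h v0
      have hPv0 : P v0 := ⟨1, W.one_mem, rfl⟩
      have hPneg : ¬ P (-v0) := by
        rintro ⟨w, hw, hwv⟩
        exact hv0 ⟨w, hw⟩ hwv
      simp [hPv0, hPneg] at h0
    · intro u hu v
      have key : ∀ x : V, P (u x) ↔ P x := by
        intro x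
        constructor
        · rintro ⟨w, hw, hwv⟩
          refine ⟨u⁻¹ * w, W.mul_mem (W.inv_mem hu) hw, ?_⟩
          show u.symm (w v0) = x
          rw [hwv]; exact u.symm_apply_apply x
        · rintro ⟨w, hw, hwv⟩
          refine ⟨u * w, W.mul_mem hu hw, ?_⟩
          show u (w v0) = u x
          rw [hwv]
      show (if P (u v) then (1:ℝ) else 0) - (if P (-(u v)) then 1 else 0)
          = (if P v then (1:ℝ) else 0) - (if P (-v) then 1 else 0)
      rw [show -(u v) = u (-v) from (map_neg u v).symm, key, key]
    · intro v
      show (if P (-v) then (1:ℝ) else 0) - (if P (-(-v)) then 1 else 0)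
          = -((if P v then (1:ℝ) else 0) - (if P (-v) then 1 else 0))
      rw [neg_neg]; ring
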